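/- arXiv:2005.11824 — 10 statements merged into one kernel-verified Lean document; each statement's English description precedes it below -/
import Mathlib

section
/- Let G be a group with automorphisms ρ and σ satisfying ρ³ = σ² = (ρσ)² = 1 and [x,σ]·[x,σ]^ρ·[x,σ]^{ρ²} = 1 for all x ∈ G (a group with triality). Then for every element g of the set U = {[x,σ] : x ∈ G}, one has g·g^ρ = g^ρ·g, i.e. g commutes with g^ρ. -/
/-- A group with triality: automorphisms ρ, σ with ρ³ = σ² = (ρσ)² = 1 and
    [x,σ]·[x,σ]^ρ·[x,σ]^{ρ²} = 1 for all x, where [x,σ] = x⁻¹ · σ(x).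
    Then every g in U = {[x,σ] : x ∈ G} commutes with ρ(g). -/
theorem group_triality_comm (G : Type*) [Group G] (ρ σ : MulAut G)
    (hρ : ρ ^ 3 = 1) (hσ : σ ^ 2 = 1) (hρσ : (ρ * σ) ^ 2 = 1)
    (htri : ∀ x : G, (x⁻¹ * σ x) * ρ (x⁻¹ * σ x) * ρ (ρ (x⁻¹ * σ x)) = 1) :
    ∀ g : G, (∃ x : G, g = x⁻¹ * σ x) → g * ρ g = ρ g * g := by
  rintro g ⟨x, rfl⟩
  set a : G := x⁻¹ * σ x with ha
  have hs : σ (σ x) = x := by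
    have h := congrArg (fun f : MulAut G => f x) hσ
    simpa [sq] using h
  have h1 : a * ρ a * ρ (ρ a) = 1 := htri x
  have h2 : a⁻¹ * (ρ a)⁻¹ * (ρ (ρ a))⁻¹ = 1 := by
    have h := htri (σ x)
    rw [hs] at h
    have hinv : (σ x)⁻¹ * x = a⁻¹ := by
      rw [ha]; group
    rw [hinv, map_inv, map_inv] at h
    exact h
  have h2'' : ρ (ρ a) * (ρ a * a) = 1 := by
    have h := congrArg Inv.inv h2
    simp only [mul_inv_rev, inv_inv, inv_one] at h
    rw [← mul_assoc] at h ⊢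
    exact h
  have e1 : a * ρ a = (ρ (ρ a))⁻¹ := eq_inv_of_mul_eq_one_left h1
  have e2 : ρ a * a = (ρ (ρ a))⁻¹ := eq_inv_of_mul_eq_one_right h2''
  exact e1.trans e2.symm
end

section
/- Let G be a group, p a prime, and Gᵢ the Zassenhaus filtration of G over 𝔽ₚ. Then g ∈ Gᵢ implies gᵖ ∈ G_{ip}. -/
open MonoidAlgebra

/-- The augmentation ideal ω of 𝔽ₚ[G], as a submodule:
    the span of all elements (1 - g)·c (this coincides with the two-sided ideal
    generated by the elements 1 - g). -/
noncomputable def zassOmegaPow (p : ℕ) (G : Type*) [Group G] :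
    ℕ → Submodule (ZMod p) (MonoidAlgebra (ZMod p) G)
  | 0 => ⊤
  | (i + 1) => Submodule.span (ZMod p)
      {x | ∃ g : G, ∃ b ∈ zassOmegaPow p G i,
        x = (1 - MonoidAlgebra.of (ZMod p) G g) * b}

/-- The Zassenhaus filtration Gᵢ = {g ∈ G : 1 - g ∈ ωⁱ}. -/
noncomputable def zassFil (p : ℕ) (G : Type*) [Group G] (i : ℕ) : Set G :=
  {g : G | (1 : MonoidAlgebra (ZMod p) G) - MonoidAlgebra.of (ZMod p) G g ∈ zassOmegaPow p G i}


/-! Each `ωⁿ` is a left ideal, because `a (1 - g) = (1 - a g) - (1 - a)`; hence `ωᵐ ωⁿ ⊆ ωᵐ⁺ⁿ`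
and `1 - g ∈ ωⁱ` gives `(1 - g)ᵖ ∈ ω^{ip}`. Since `𝔽ₚ[G]` has characteristic `p` and `1` commutes
with `g`, `(1 - g)ᵖ = 1 - gᵖ`. -/

section ZassenhausIdeal

variable {p : ℕ} {G : Type*} [Group G]

lemma one_sub_of_mul_mem_zassOmegaPow_succ {n : ℕ} (g : G)
    {x : MonoidAlgebra (ZMod p) G} (hx : x ∈ zassOmegaPow p G n) :
    (1 - of (ZMod p) G g) * x ∈ zassOmegaPow p G (n + 1) :=
  Submodule.subset_span ⟨g, x, hx, rfl⟩

lemma of_mul_mem_zassOmegaPow {n : ℕ} (a : G) {x : MonoidAlgebra (ZMod p) G}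
    (hx : x ∈ zassOmegaPow p G n) : of (ZMod p) G a * x ∈ zassOmegaPow p G n := by
  cases n with
  | zero => exact Submodule.mem_top
  | succ n =>
    induction hx using Submodule.span_induction with
    | mem x hx =>
      obtain ⟨g, d, hd, rfl⟩ := hx
      have hsplit : of (ZMod p) G a * ((1 - of (ZMod p) G g) * d)
          = (1 - of (ZMod p) G (a * g)) * d - (1 - of (ZMod p) G a) * d := by
        rw [map_mul]
        noncomm_ring
      rw [hsplit]
      exact Submodule.sub_mem _ (one_sub_of_mul_mem_zassOmegaPow_succ _ hd)
        (one_sub_of_mul_mem_zassOmegaPow_succ _ hd)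
    | zero => simp
    | add x y _ _ hx hy => rw [mul_add]; exact Submodule.add_mem _ hx hy
    | smul r x _ hx => rw [mul_smul_comm]; exact Submodule.smul_mem _ r hx

lemma mul_mem_zassOmegaPow_left {n : ℕ} (c : MonoidAlgebra (ZMod p) G)
    {x : MonoidAlgebra (ZMod p) G} (hx : x ∈ zassOmegaPow p G n) :
    c * x ∈ zassOmegaPow p G n := by
  induction c using MonoidAlgebra.induction_on with
  | of a => exact of_mul_mem_zassOmegaPow a hx
  | add c c' hc hc' => rw [add_mul]; exact Submodule.add_mem _ hc hc'
  | smul r c hc => rw [smul_mul_assoc]; exact Submodule.smul_mem _ r hc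

lemma mul_mem_zassOmegaPow_add {m n : ℕ} {x y : MonoidAlgebra (ZMod p) G}
    (hx : x ∈ zassOmegaPow p G m) (hy : y ∈ zassOmegaPow p G n) :
    x * y ∈ zassOmegaPow p G (m + n) := by
  induction m generalizing x with
  | zero => rw [zero_add]; exact mul_mem_zassOmegaPow_left x hy
  | succ m ih =>
    rw [Nat.add_right_comm]
    induction hx using Submodule.span_induction with
    | mem x hx =>
      obtain ⟨g, d, hd, rfl⟩ := hx
      rw [mul_assoc]
      exact one_sub_of_mul_mem_zassOmegaPow_succ g (ih hd)
    | zero => simp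
    | add x x' _ _ hx hx' => rw [add_mul]; exact Submodule.add_mem _ hx hx'
    | smul r x _ hx => rw [smul_mul_assoc]; exact Submodule.smul_mem _ r hx

lemma pow_mem_zassOmegaPow_mul {i : ℕ} {x : MonoidAlgebra (ZMod p) G}
    (hx : x ∈ zassOmegaPow p G i) (k : ℕ) : x ^ k ∈ zassOmegaPow p G (i * k) := by
  induction k with
  | zero => exact Submodule.mem_top
  | succ k ih => rw [pow_succ, Nat.mul_succ]; exact mul_mem_zassOmegaPow_add ih hx

end ZassenhausIdeal

lemma one_sub_of_pow_char {K M : Type*} [Field K] [Monoid M] (p : ℕ) [Fact p.Prime] [CharP K p]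
    (g : M) : (1 - of K M g) ^ p = 1 - of K M (g ^ p) := by
  have : CharP (MonoidAlgebra K M) p := charP_of_injective_algebraMap' K p
  rw [sub_pow_char_of_commute p (Commute.one_left _), one_pow, map_pow]

theorem zassenhaus_pow_p_general (p : ℕ) [Fact p.Prime] (G : Type*) [Group G]
    (i : ℕ) (g : G) (hg : g ∈ zassFil p G i) :
    g ^ p ∈ zassFil p G (i * p) := by
  have hpow := pow_mem_zassOmegaPow_mul hg p
  rwa [one_sub_of_pow_char] at hpow

/-- For the Zassenhaus filtration over 𝔽ₚ: g ∈ Gᵢ implies gᵖ ∈ G_{ip}. -/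
theorem zassenhaus_pow_p (p : ℕ) [Fact p.Prime] (G : Type*) [Group G]
    (i : ℕ) (hi : 1 ≤ i) (g : G) (hg : g ∈ zassFil p G i) :
    g ^ p ∈ zassFil p G (i * p) :=
  zassenhaus_pow_p_general p G i g hg
end

section
/- Let L be a Lie algebra over a field F of characteristic ≠ 2, 3, equipped with automorphisms ρ, σ such that ρ³ = σ² = (ρσ)² = id and for all x ∈ L, (σ(x) - x) + ρ(σ(x) - x) + ρ²(σ(x) - x) = 0 (a Lie algebra with triality). Let H = {x ∈ L : σ(x) = -x}. Then for all x, y ∈ H, [ρ(x), y] = [x, ρ(y)]. -/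
/-- In a Lie algebra with triality over a field of characteristic ≠ 2,3,
    for x, y in the (-1)-eigenspace H of σ one has [ρ(x), y] = [x, ρ(y)]. -/
theorem lie_triality_rho_symm (F : Type*) [Field F] (h2 : (2 : F) ≠ 0) (h3 : (3 : F) ≠ 0)
    (L : Type*) [LieRing L] [LieAlgebra F L] (ρ σ : L ≃ₗ⁅F⁆ L)
    (hρ : ∀ x : L, ρ (ρ (ρ x)) = x) (hσ : ∀ x : L, σ (σ x) = x)
    (hρσ : ∀ x : L, ρ (σ (ρ (σ x))) = x)
    (htri : ∀ x : L, (σ x - x) + ρ (σ x - x) + ρ (ρ (σ x - x)) = 0)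
    (x y : L) (hx : σ x = -x) (hy : σ y = -y) :
    ⁅ρ x, y⁆ = ⁅x, ρ y⁆ := by
  have msub : ∀ (e : L ≃ₗ⁅F⁆ L) (a b : L), e (a - b) = e a - e b := fun e a b => e.toLieHom.map_sub a b
  have madd : ∀ (e : L ≃ₗ⁅F⁆ L) (a b : L), e (a + b) = e a + e b := fun e a b => e.toLieHom.map_add a b
  have mneg : ∀ (e : L ≃ₗ⁅F⁆ L) (a : L), e (-a) = -(e a) := fun e a => e.toLieHom.map_neg a
  -- Step 1: for z in the (-1)-eigenspace, z + ρ z + ρ² z = 0.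
  have key : ∀ z : L, σ z = -z → z + ρ z + ρ (ρ z) = 0 := by
    intro z hz
    have h := htri z
    rw [hz] at h
    simp only [show -z - z = -(z + z) from by abel, mneg, madd] at h
    have h' : -((z + ρ z + ρ (ρ z)) + (z + ρ z + ρ (ρ z))) = 0 := by rw [← h]; abel
    have h'' : (2:F) • (z + ρ z + ρ (ρ z)) = 0 := by
      rw [two_smul]
      exact neg_eq_zero.mp h'
    rcases smul_eq_zero.mp h'' with h₀ | h₀
    · exact absurd h₀ h2
    · exact h₀
  -- Step 2: σ ∘ ρ = ρ² ∘ σ.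
  have hcomm : ∀ z : L, σ (ρ z) = ρ (ρ (σ z)) := by
    intro z
    have h := hρσ (σ z)
    rw [hσ] at h
    calc σ (ρ z) = ρ (ρ (ρ (σ (ρ z)))) := (hρ _).symm
    _ = ρ (ρ (σ z)) := by rw [h]
  have hx2 : ρ (ρ x) = -x - ρ x := by
    have h := key x hx
    have h' : ρ (ρ x) = 0 - x - ρ x := by rw [← h]; abel
    simpa using h'
  have hy2 : ρ (ρ y) = -y - ρ y := by
    have h := key y hy
    have h' : ρ (ρ y) = 0 - y - ρ y := by rw [← h]; abel
    simpa using h'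
  have hσρx : σ (ρ x) = x + ρ x := by rw [hcomm, hx, mneg, mneg, hx2]; abel
  have hσρy : σ (ρ y) = y + ρ y := by rw [hcomm, hy, mneg, mneg, hy2]; abel
  set A := ⁅ρ x, y⁆ - ⁅x, ρ y⁆ with hA
  have hσA : σ A = -A := by
    rw [hA, msub, LieEquiv.map_lie, LieEquiv.map_lie, hσρx, hσρy, hx, hy]
    simp only [add_lie, lie_add, neg_lie, lie_neg]
    abel
  have hρA : ρ A = A := by
    rw [hA, msub, LieEquiv.map_lie, LieEquiv.map_lie, hx2, hy2]
    simp only [sub_lie, lie_sub, neg_lie, lie_neg]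
    abel
  have h3A := key A hσA
  rw [hρA, hρA] at h3A
  have h3A' : (3:F) • A = 0 := by
    rw [show (3:F) = 1 + 1 + 1 by norm_num, add_smul, add_smul, one_smul, ← h3A]
  rcases smul_eq_zero.mp h3A' with h | h
  · exact absurd h h3
  · exact sub_eq_zero.mp h
end

section
/- Let L be a Lie algebra with triality over a field of characteristic ≠ 2,3 and H = {x ∈ L : x^σ = -x}. Define a * b = [a + 2a^ρ, b] for a, b ∈ H. Then H is closed under *, the product * is anticommutative on H (a*b = -b*a), and H with * satisfies the Malcev identity (x*y)*(x*z) = ((x*y)*z)*x + ((y*z)*x)*x + ((z*x)*x)*y. -/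
/-- The Malcev product a * b = [a + 2a^ρ, b] on the (-1)-eigenspace H of σ. -/
noncomputable def mstar {F : Type*} [Field F] {L : Type*} [LieRing L] [LieAlgebra F L]
    (ρ : L ≃ₗ⁅F⁆ L) (a b : L) : L :=
  ⁅a + (2 : F) • ρ a, b⁆

/-!
On the (-1)-eigenspace `H` of `σ` the triality relation gives `ρ² = -1 - ρ`, and then
`ρ³ = (ρσ)² = 1` give `σρ = 1 + ρ`; together these force `⁅ρ a, b⁆ = ⁅a, ρ b⁆` on `H`, which yields
closure and anticommutativity of `a * b = ⁅a + 2ρa, b⁆`.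

For `x, y ∈ H` the `ρ`-orbit sum `e = ⁅x, y⁆ + ρ⁅x, y⁆ + ρ²⁅x, y⁆` is fixed by `ρ`, so `ad e` is a
derivation of `*`; on `H` it acts as Sagle's operator `D(x, y) = L_{xy} + [L_x, L_y]`. In an
anticommutative algebra the Leibniz rule for `D(x, y)` on `xz` reads
`J(x, y, xz) + J(x, y, z)x = 2 J(x, xy, z)` (`J` the Jacobian), and subtracting twice the same rule
for `(x, z, y)` leaves three times the Malcev identity.
-/

section Malcev

variable {R M : Type*} [CommRing R] [AddCommGroup M] [Module R M] (μ : M →ₗ[R] M →ₗ[R] M)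

def sagleOp (x y w : M) : M := μ (μ x y) w + μ x (μ y w) - μ y (μ x w)

variable {μ} {S : Submodule R M}

theorem anticomm_of_alternating (halt : ∀ a ∈ S, μ a a = 0) {a b : M} (ha : a ∈ S)
    (hb : b ∈ S) : μ a b = -μ b a := by
  have h := halt (a + b) (S.add_mem ha hb)
  simp only [map_add, LinearMap.add_apply, halt a ha, halt b hb] at h
  exact eq_neg_of_add_eq_zero_left (by simpa [add_comm] using h)

theorem malcev_of_sagleOp_leibniz (h3 : IsUnit (3 : R)) (hS : ∀ a ∈ S, ∀ b ∈ S, μ a b ∈ S)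
    (halt : ∀ a ∈ S, μ a a = 0)
    (hder : ∀ x ∈ S, ∀ y ∈ S, ∀ z ∈ S,
      sagleOp μ x y (μ x z) = μ (sagleOp μ x y x) z + μ x (sagleOp μ x y z))
    {x y z : M} (hx : x ∈ S) (hy : y ∈ S) (hz : z ∈ S) :
    μ (μ x y) (μ x z) = μ (μ (μ x y) z) x + μ (μ (μ y z) x) x + μ (μ (μ z x) x) y := by
  have hxy := hS x hx y hy
  have hxz := hS x hx z hz
  have hyz := hS y hy z hz
  have anti := fun {a b : M} (ha : a ∈ S) (hb : b ∈ S) => anticomm_of_alternating halt ha hb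
  have h1 := hder x hx y hy z hz
  have h2 := hder x hx z hz y hy
  -- the `anti` instances bring every monomial into one orientation
  simp only [sagleOp, map_add, map_sub, map_neg, LinearMap.add_apply, LinearMap.sub_apply,
    LinearMap.neg_apply, halt x hx, map_zero, LinearMap.zero_apply,
    anti hy hx, anti hz hx, anti hz hy, anti hx hxy, anti hx hxz, anti hxz hxy,
    anti hy (hS _ hxz x hx), anti hz (hS _ hxy x hx), anti hx (hS _ hxy z hz),
    anti hxz hy, anti hz hxy, anti hx hyz, anti hx (hS _ hyz x hx)] at h1 h2 ⊢
  apply h3.smul_left_cancel.mp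
  linear_combination (norm := module) h1 - (2 : R) • h2

end Malcev

section Triality

variable {F L : Type*} [Field F] [LieRing L] [LieAlgebra F L] {ρ σ : L ≃ₗ⁅F⁆ L}

variable (ρ) in
def mstarBilin : L →ₗ[F] L →ₗ[F] L :=
  (LieModule.toEnd F L L : L →ₗ[F] Module.End F L) ∘ₗ
    (LinearMap.id + (2 : F) • (ρ : L →ₗ[F] L))

@[simp]
theorem mstarBilin_apply (a b : L) : mstarBilin ρ a b = mstar ρ a b := rfl

theorem lie_mstar_of_rho_eq {d : L} (hd : ρ d = d) (a b : L) :
    ⁅d, mstar ρ a b⁆ = mstar ρ ⁅d, a⁆ b + mstar ρ a ⁅d, b⁆ := by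
  have h : ⁅d, ρ a⁆ = ρ ⁅d, a⁆ := by rw [LieEquiv.map_lie, hd]
  rw [mstar, mstar, mstar, leibniz_lie, lie_add, lie_smul, h]

theorem rho_orbit_sum_eq_self (hρ : ∀ x, ρ (ρ (ρ x)) = x) (u : L) :
    ρ (u + ρ u + ρ (ρ u)) = u + ρ u + ρ (ρ u) := by
  rw [map_add, map_add, hρ]; abel

theorem rho_rho_of_sigma_eq_neg (h2 : (2 : F) ≠ 0)
    (htri : ∀ x : L, (σ x - x) + ρ (σ x - x) + ρ (ρ (σ x - x)) = 0) {a : L} (ha : σ a = -a) :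
    ρ (ρ a) = -a - ρ a := by
  have h : (-2 : F) • (a + ρ a + ρ (ρ a)) = 0 := by
    have := htri a
    rw [ha, show -a - a = (-2 : F) • a by module] at this
    simpa only [map_smul, smul_add] using this
  rw [smul_eq_zero, or_iff_right (neg_ne_zero.mpr h2)] at h
  linear_combination (norm := module) h

theorem sigma_rho_of_sigma_eq_neg (hρ : ∀ x : L, ρ (ρ (ρ x)) = x)
    (hρσ : ∀ x : L, ρ (σ (ρ (σ x))) = x) {a : L} (ha : σ a = -a) (hρρ : ρ (ρ a) = -a - ρ a) :
    σ (ρ a) = a + ρ a := by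
  have h : ρ (σ (ρ a)) = -a := by
    simpa only [ha, map_neg, neg_eq_iff_eq_neg] using hρσ a
  rw [← hρ (σ (ρ a)), h, map_neg, map_neg, hρρ]
  abel

theorem lie_rho_eq_lie_rho (h3 : (3 : F) ≠ 0)
    (hρρ : ∀ a, σ a = -a → ρ (ρ a) = -a - ρ a) (hσρ : ∀ a, σ a = -a → σ (ρ a) = a + ρ a)
    {a b : L} (ha : σ a = -a) (hb : σ b = -b) : ⁅ρ a, b⁆ = ⁅a, ρ b⁆ := by
  set w := ⁅ρ a, b⁆ - ⁅a, ρ b⁆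
  have hσw : σ w = -w := by
    simp only [w, map_sub, LieEquiv.map_lie, hσρ a ha, hσρ b hb, ha, hb, add_lie, lie_add,
      neg_lie, lie_neg]
    abel
  have hρw : ρ w = w := by
    simp only [w, map_sub, LieEquiv.map_lie, hρρ a ha, hρρ b hb, sub_lie, lie_sub, neg_lie,
      lie_neg]
    abel
  have h3w : (3 : F) • w = 0 := by
    have h := hρρ w hσw
    rw [hρw, hρw] at h
    linear_combination (norm := module) h
  exact sub_eq_zero.mp ((smul_eq_zero.mp h3w).resolve_left h3)

theorem sigma_mstar {a b : L} (ha : σ a = -a) (hb : σ b = -b) (hσρ : σ (ρ a) = a + ρ a) :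
    σ (mstar ρ a b) = -mstar ρ a b := by
  rw [mstar, LieEquiv.map_lie, map_add, map_smul, hσρ, ha, hb]
  simp only [add_lie, neg_lie, lie_neg, smul_lie, smul_add]
  module

theorem mstar_anticomm {a b : L} (hab : ⁅ρ a, b⁆ = ⁅a, ρ b⁆) :
    mstar ρ a b = -mstar ρ b a := by
  simp only [mstar, add_lie, smul_lie]
  linear_combination (norm := module) (2 : F) • hab - lie_skew a b - (2 : F) • lie_skew a (ρ b)

theorem mstar_self (h2 : (2 : F) ≠ 0) {a : L} (haa : ⁅ρ a, a⁆ = ⁅a, ρ a⁆) : mstar ρ a a = 0 := by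
  have h : (2 : F) • mstar ρ a a = 0 := by
    linear_combination (norm := module) mstar_anticomm haa
  exact (smul_eq_zero.mp h).resolve_left h2

theorem orbit_sum_lie_eq {a b : L} (ha : ρ (ρ a) = -a - ρ a) (hb : ρ (ρ b) = -b - ρ b)
    (hab : ⁅ρ a, b⁆ = ⁅a, ρ b⁆) :
    ⁅a, b⁆ + ρ ⁅a, b⁆ + ρ (ρ ⁅a, b⁆) =
      mstar ρ a b + (2 : F) • ρ (mstar ρ a b) + ⁅a + (2 : F) • ρ a, b + (2 : F) • ρ b⁆ := by
  simp only [mstar, LieEquiv.map_lie, map_add, map_smul, ha, hb]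
  simp only [add_lie, sub_lie, neg_lie, smul_lie, lie_add, lie_sub, lie_neg, lie_smul]
  linear_combination (norm := module) (-3 : F) • hab

theorem lie_orbit_sum_eq_sagleOp {a b : L} (ha : ρ (ρ a) = -a - ρ a) (hb : ρ (ρ b) = -b - ρ b)
    (hab : ⁅ρ a, b⁆ = ⁅a, ρ b⁆) (z : L) :
    ⁅⁅a, b⁆ + ρ ⁅a, b⁆ + ρ (ρ ⁅a, b⁆), z⁆ = sagleOp (mstarBilin ρ) a b z := by
  rw [orbit_sum_lie_eq ha hb hab, add_lie, lie_lie]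
  simp only [sagleOp, mstarBilin_apply, mstar, add_sub_assoc]

theorem sagleOp_mstar (hρ : ∀ x, ρ (ρ (ρ x)) = x) {a b : L} (ha : ρ (ρ a) = -a - ρ a)
    (hb : ρ (ρ b) = -b - ρ b) (hab : ⁅ρ a, b⁆ = ⁅a, ρ b⁆) (v w : L) :
    sagleOp (mstarBilin ρ) a b (mstar ρ v w) =
      mstar ρ (sagleOp (mstarBilin ρ) a b v) w + mstar ρ v (sagleOp (mstarBilin ρ) a b w) := by
  simp only [← lie_orbit_sum_eq_sagleOp ha hb hab]
  exact lie_mstar_of_rho_eq (rho_orbit_sum_eq_self hρ _) v w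

end Triality

theorem lie_triality_malcev_general (F : Type*) [Field F] (h2 : (2 : F) ≠ 0) (h3 : (3 : F) ≠ 0)
    (L : Type*) [LieRing L] [LieAlgebra F L] (ρ σ : L ≃ₗ⁅F⁆ L)
    (hρ : ∀ x : L, ρ (ρ (ρ x)) = x)
    (hρσ : ∀ x : L, ρ (σ (ρ (σ x))) = x)
    (htri : ∀ x : L, (σ x - x) + ρ (σ x - x) + ρ (ρ (σ x - x)) = 0) :
    (∀ x y : L, σ x = -x → σ y = -y → σ (mstar ρ x y) = -(mstar ρ x y)) ∧
    (∀ x y : L, σ x = -x → σ y = -y → mstar ρ x y = -(mstar ρ y x)) ∧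
    (∀ x y z : L, σ x = -x → σ y = -y → σ z = -z →
      mstar ρ (mstar ρ x y) (mstar ρ x z) =
        mstar ρ (mstar ρ (mstar ρ x y) z) x + mstar ρ (mstar ρ (mstar ρ y z) x) x +
          mstar ρ (mstar ρ (mstar ρ z x) x) y) := by
  have hρρ : ∀ a, σ a = -a → ρ (ρ a) = -a - ρ a := fun _ => rho_rho_of_sigma_eq_neg h2 htri
  have hσρ : ∀ a, σ a = -a → σ (ρ a) = a + ρ a := fun a ha =>
    sigma_rho_of_sigma_eq_neg hρ hρσ ha (hρρ a ha)
  have hcomm : ∀ a b, σ a = -a → σ b = -b → ⁅ρ a, b⁆ = ⁅a, ρ b⁆ := fun _ _ =>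
    lie_rho_eq_lie_rho h3 hρρ hσρ
  have hclosed : ∀ a b, σ a = -a → σ b = -b → σ (mstar ρ a b) = -mstar ρ a b :=
    fun a _ ha hb => sigma_mstar ha hb (hσρ a ha)
  refine ⟨hclosed, fun a b ha hb => mstar_anticomm (hcomm a b ha hb), fun x y z hx hy hz => ?_⟩
  let H := Module.End.eigenspace (σ : Module.End F L) (-1)
  have mem_H : ∀ {a}, a ∈ H ↔ σ a = -a := by simp [H]
  simpa only [mstarBilin_apply] using malcev_of_sagleOp_leibniz (μ := mstarBilin ρ) (S := H)
    h3.isUnit (fun a ha b hb => mem_H.mpr (hclosed a b (mem_H.mp ha) (mem_H.mp hb)))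
    (fun a ha => mstar_self h2 (hcomm a a (mem_H.mp ha) (mem_H.mp ha)))
    (fun a ha b hb c _ => sagleOp_mstar hρ (hρρ a (mem_H.mp ha)) (hρρ b (mem_H.mp hb))
      (hcomm a b (mem_H.mp ha) (mem_H.mp hb)) a c)
    (mem_H.mpr hx) (mem_H.mpr hy) (mem_H.mpr hz)

/-- In a Lie algebra with triality over a field of characteristic ≠ 2,3,
    the (-1)-eigenspace H of σ is closed under a * b = [a + 2a^ρ, b], the product *
    is anticommutative on H, and H with * satisfies the Malcev identity. -/
theorem lie_triality_malcev (F : Type*) [Field F] (h2 : (2 : F) ≠ 0) (h3 : (3 : F) ≠ 0)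
    (L : Type*) [LieRing L] [LieAlgebra F L] (ρ σ : L ≃ₗ⁅F⁆ L)
    (hρ : ∀ x : L, ρ (ρ (ρ x)) = x) (hσ : ∀ x : L, σ (σ x) = x)
    (hρσ : ∀ x : L, ρ (σ (ρ (σ x))) = x)
    (htri : ∀ x : L, (σ x - x) + ρ (σ x - x) + ρ (ρ (σ x - x)) = 0) :
    (∀ x y : L, σ x = -x → σ y = -y → σ (mstar ρ x y) = -(mstar ρ x y)) ∧
    (∀ x y : L, σ x = -x → σ y = -y → mstar ρ x y = -(mstar ρ y x)) ∧
    (∀ x y z : L, σ x = -x → σ y = -y → σ z = -z →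
      mstar ρ (mstar ρ x y) (mstar ρ x z) =
        mstar ρ (mstar ρ (mstar ρ x y) z) x + mstar ρ (mstar ρ (mstar ρ y z) x) x +
          mstar ρ (mstar ρ (mstar ρ z x) x) y) :=
  lie_triality_malcev_general F h2 h3 L ρ σ hρ hρσ htri
end

section
/- Let L be a Lie algebra with triality over a field of characteristic ≠ 2, 3, H = {x ∈ L : x^σ = -x}, and a*b = [a + 2a^ρ, b] the Malcev product on H. Then for all a, b, c ∈ H: 3[[a,b],c] = 2(a*b)*c + (c*b)*a + (a*c)*b, where [ , ] is the Lie bracket of L. -/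
/-- 3[[a,b],c] = 2(a*b)*c + (c*b)*a + (a*c)*b for a, b, c in the (-1)-eigenspace H
    of σ, in a Lie algebra with triality over a field of characteristic ≠ 2,3. -/
theorem lie_triality_bracket_formula (F : Type*) [Field F] (h2 : (2 : F) ≠ 0) (h3 : (3 : F) ≠ 0)
    (L : Type*) [LieRing L] [LieAlgebra F L] (ρ σ : L ≃ₗ⁅F⁆ L)
    (hρ : ∀ x : L, ρ (ρ (ρ x)) = x) (hσ : ∀ x : L, σ (σ x) = x)
    (hρσ : ∀ x : L, ρ (σ (ρ (σ x))) = x)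
    (htri : ∀ x : L, (σ x - x) + ρ (σ x - x) + ρ (ρ (σ x - x)) = 0)
    (a b c : L) (ha : σ a = -a) (hb : σ b = -b) (hc : σ c = -c) :
    (3 : F) • ⁅⁅a, b⁆, c⁆ =
      (2 : F) • mstar ρ (mstar ρ a b) c + mstar ρ (mstar ρ c b) a + mstar ρ (mstar ρ a c) b := by
  -- linearity facts for ρ and σ
  have ρl : ∀ x y : L, ρ ⁅x, y⁆ = ⁅ρ x, ρ y⁆ := fun x y => ρ.map_lie x y
  have σl : ∀ x y : L, σ ⁅x, y⁆ = ⁅σ x, σ y⁆ := fun x y => σ.map_lie x y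
  have ρadd : ∀ x y : L, ρ (x + y) = ρ x + ρ y := fun x y => ρ.toLieHom.map_add x y
  have ρsub : ∀ x y : L, ρ (x - y) = ρ x - ρ y := fun x y => ρ.toLieHom.map_sub x y
  have ρneg : ∀ x : L, ρ (-x) = -ρ x := fun x => ρ.toLieHom.map_neg x
  have ρsmul : ∀ (t : F) (x : L), ρ (t • x) = t • ρ x := fun t x => ρ.toLieHom.map_smul t x
  have σadd : ∀ x y : L, σ (x + y) = σ x + σ y := fun x y => σ.toLieHom.map_add x y
  have σsub : ∀ x y : L, σ (x - y) = σ x - σ y := fun x y => σ.toLieHom.map_sub x y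
  have σneg : ∀ x : L, σ (-x) = -σ x := fun x => σ.toLieHom.map_neg x
  have σsmul : ∀ (t : F) (x : L), σ (t • x) = t • σ x := fun t x => σ.toLieHom.map_smul t x
  -- cancellation of nonzero scalars
  have cancel : ∀ t : F, t ≠ 0 → ∀ X : L, t • X = 0 → X = 0 := by
    intro t ht X h
    have := congrArg (fun z => t⁻¹ • z) h
    simpa [smul_smul, inv_mul_cancel₀ ht] using this
  -- key consequence of triality on the (-1)-eigenspace
  have key : ∀ x : L, σ x = -x → x + ρ x + ρ (ρ x) = 0 := by
    intro x hx
    have h := htri x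
    rw [hx] at h
    simp only [ρsub, ρneg] at h
    refine cancel 2 h2 _ ?_
    rw [two_smul]
    linear_combination (norm := module) (-1 : ℤ) • h
  have rra : ρ (ρ a) = -a - ρ a := by
    have h := key a ha; linear_combination (norm := module) h
  have rrb : ρ (ρ b) = -b - ρ b := by
    have h := key b hb; linear_combination (norm := module) h
  have rrc : ρ (ρ c) = -c - ρ c := by
    have h := key c hc; linear_combination (norm := module) h
  -- σ ∘ ρ = ρ² ∘ σ
  have hσρ : ∀ x : L, σ (ρ x) = ρ (ρ (σ x)) := by
    intro x
    have h := hρσ (σ x)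
    rw [hσ] at h
    calc σ (ρ x) = ρ (ρ (ρ (σ (ρ x)))) := (hρ _).symm
      _ = ρ (ρ (σ x)) := by rw [h]
  have sρa : σ (ρ a) = a + ρ a := by rw [hσρ, ha, ρneg, ρneg, rra]; abel
  have sρb : σ (ρ b) = b + ρ b := by rw [hσρ, hb, ρneg, ρneg, rrb]; abel
  have sρc : σ (ρ c) = c + ρ c := by rw [hσρ, hc, ρneg, ρneg, rrc]; abel
  -- Jacobi identity and skew-symmetry in left-nested form
  have jac : ∀ x y z : L, ⁅⁅x, y⁆, z⁆ + ⁅⁅y, z⁆, x⁆ + ⁅⁅z, x⁆, y⁆ = 0 := by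
    intro x y z
    rw [← lie_skew ⁅x, y⁆ z, ← lie_skew ⁅y, z⁆ x, ← lie_skew ⁅z, x⁆ y]
    have h := lie_jacobi x y z
    linear_combination (norm := module) (-1 : ℤ) • h
  have skw : ∀ x y z : L, ⁅⁅x, y⁆, z⁆ + ⁅⁅y, x⁆, z⁆ = 0 := by
    intro x y z
    rw [← add_lie, show ⁅x, y⁆ + ⁅y, x⁆ = 0 by rw [← lie_skew]; abel, zero_lie]
  -- triality relations on degree-3 monomials
  have t1 := htri ⁅⁅a, b⁆, c⁆
  have t2 := htri ⁅⁅a, c⁆, b⁆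
  have t3 := htri ⁅⁅b, c⁆, a⁆
  have t4 := htri ⁅⁅c, b⁆, a⁆
  -- triality relations on degree-2 monomials, bracketed with a letter
  have s1 := congrArg (fun w => ⁅w, c⁆) (htri ⁅a, ρ b⁆)
  have s2 := congrArg (fun w => ⁅w, ρ c⁆) (htri ⁅a, ρ b⁆)
  have s3 := congrArg (fun w => ⁅w, ρ b⁆) (htri ⁅a, ρ c⁆)
  have s4 := congrArg (fun w => ⁅w, ρ c⁆) (htri ⁅b, ρ a⁆)
  have s5 := congrArg (fun w => ⁅w, a⁆) (htri ⁅b, ρ c⁆)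
  have s6 := congrArg (fun w => ⁅w, ρ a⁆) (htri ⁅b, ρ c⁆)
  have s7 := congrArg (fun w => ⁅w, b⁆) (htri ⁅c, ρ a⁆)
  have s8 := congrArg (fun w => ⁅w, ρ a⁆) (htri ⁅c, ρ b⁆)
  -- skew-symmetry instances
  have a1 := skw a c b
  have a2 := skw a (ρ b) c
  have a3 := skw a (ρ b) (ρ c)
  have a4 := skw a (ρ c) b
  have a5 := skw a (ρ c) (ρ b)
  have a6 := skw b c a
  have a7 := skw b c (ρ a)
  have a8 := skw b (ρ c) a
  have a9 := skw b (ρ c) (ρ a)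
  -- Jacobi instances
  have j1 := jac a b c
  have j2 := jac a b (ρ c)
  have j3 := jac a c (ρ b)
  have j4 := jac a (ρ b) (ρ c)
  have j5 := jac b c (ρ a)
  have j6 := jac b (ρ a) (ρ c)
  -- reduce to a 3-scaled identity
  rw [← sub_eq_zero]
  refine cancel 3 h3 _ ?_
  simp only [mstar, σl, ρl, σadd, σsub, σneg, σsmul, ρadd, ρsub, ρneg, ρsmul,
    ha, hb, hc, sρa, sρb, sρc, rra, rrb, rrc,
    add_lie, lie_add, sub_lie, lie_sub, neg_lie, lie_neg, smul_lie, lie_smul,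
    zero_lie, lie_zero, smul_neg, neg_neg] at t1 t2 t3 t4 s1 s2 s3 s4 s5 s6 s7 s8 ⊢
  linear_combination (norm := module)
    (6 : F) • t1 - (3 : F) • t2 + (6 : F) • t3 + (3 : F) • t4
    - (6 : F) • s1 - (4 : F) • s2 + (2 : F) • s3 + (4 : F) • s4 - (4 : F) • s5 - (4 : F) • s6
    - (2 : F) • s7 + (2 : F) • s8
    - (3 : F) • a1 - (6 : F) • a2 - (12 : F) • a3 + (18 : F) • a4 + (12 : F) • a5 - (3 : F) • a6
    - (6 : F) • a7 - (12 : F) • a8 - (24 : F) • a9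
    + (3 : F) • j1 - (12 : F) • j2 + (6 : F) • j3 - (12 : F) • j4 - (6 : F) • j5 + (12 : F) • j6
end

section
/- Let L be a Lie algebra with triality over a field of characteristic ≠ 2, 3, H the (-1)-eigenspace of σ, and * the Malcev product a*b = [a + 2a^ρ, b]. Then for all x, y, z ∈ H: (x*y)*z = 2[[x^{ρ²}, y^ρ], z] + [[x,y], z]. -/
/-- (x*y)*z = 2[[x^{ρ²}, y^ρ], z] + [[x,y], z] for x, y, z in the (-1)-eigenspace H
    of σ, in a Lie algebra with triality over a field of characteristic ≠ 2,3. -/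
theorem lie_triality_star_formula (F : Type*) [Field F] (h2 : (2 : F) ≠ 0) (h3 : (3 : F) ≠ 0)
    (L : Type*) [LieRing L] [LieAlgebra F L] (ρ σ : L ≃ₗ⁅F⁆ L)
    (hρ : ∀ x : L, ρ (ρ (ρ x)) = x) (hσ : ∀ x : L, σ (σ x) = x)
    (hρσ : ∀ x : L, ρ (σ (ρ (σ x))) = x)
    (htri : ∀ x : L, (σ x - x) + ρ (σ x - x) + ρ (ρ (σ x - x)) = 0)
    (x y z : L) (hx : σ x = -x) (hy : σ y = -y) (hz : σ z = -z) :
    mstar ρ (mstar ρ x y) z = (2 : F) • ⁅⁅ρ (ρ x), ρ y⁆, z⁆ + ⁅⁅x, y⁆, z⁆ := by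
  have ρ_add : ∀ a b : L, ρ (a + b) = ρ a + ρ b := fun a b => by
    simpa using map_add (ρ : L ≃ₗ[F] L) a b
  have ρ_neg : ∀ a : L, ρ (-a) = -ρ a := fun a => by
    simpa using map_neg (ρ : L ≃ₗ[F] L) a
  have ρ_sub : ∀ a b : L, ρ (a - b) = ρ a - ρ b := fun a b => by
    simpa using map_sub (ρ : L ≃ₗ[F] L) a b
  have ρ_smul : ∀ (t : F) (a : L), ρ (t • a) = t • ρ a := fun t a =>
    map_smul (ρ : L ≃ₗ[F] L) t a
  -- sum relation for elements of H
  have hsum : ∀ w : L, σ w = -w → w + ρ w + ρ (ρ w) = 0 := by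
    intro w hw
    have h := htri w
    rw [hw] at h
    have e1 : -w - w = -((2:F) • w) := by rw [two_smul]; abel
    rw [e1, ρ_neg, ρ_smul, ρ_neg, ρ_smul] at h
    have h' : (2 : F) • (w + ρ w + ρ (ρ w)) = 0 := by
      linear_combination (norm := module) -h
    exact (smul_eq_zero.mp h').resolve_left h2
  have hx3 := hsum x hx
  have hy3 := hsum y hy
  have hx2 : ρ (ρ x) = -x - ρ x := by linear_combination (norm := module) hx3
  have hy2 : ρ (ρ y) = -y - ρ y := by linear_combination (norm := module) hy3
  -- σ ∘ ρ = ρ² ∘ σ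
  have hsr : ∀ w : L, σ (ρ w) = ρ (ρ (σ w)) := by
    intro w
    have h1 : ρ (σ (ρ w)) = σ w := by
      have := hρσ (σ w); rwa [hσ w] at this
    have h2' := congrArg (fun t => ρ (ρ t)) h1
    simpa [hρ] using h2'
  -- key identity: ⁅ρ x, y⁆ = ⁅x, ρ y⁆
  have hu : ⁅ρ x, y⁆ = ⁅x, ρ y⁆ := by
    have h := htri ⁅ρ x, y⁆
    have hσd : σ ⁅ρ x, y⁆ = ⁅ρ (ρ x), y⁆ := by
      rw [LieEquiv.map_lie, hsr x, hx, hy, ρ_neg, ρ_neg, neg_lie, lie_neg, neg_neg]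
    rw [hσd] at h
    simp only [ρ_sub, LieEquiv.map_lie, hρ] at h
    simp only [hx2, hy2] at h
    simp only [sub_lie, lie_sub, add_lie, lie_add, neg_lie, lie_neg, sub_neg_eq_add] at h
    have h3' : (3 : F) • (⁅x, ρ y⁆ - ⁅ρ x, y⁆) = 0 := by
      linear_combination (norm := module) h
    have := (smul_eq_zero.mp h3').resolve_left h3
    rw [sub_eq_zero] at this
    exact this.symm
  -- final computation
  have hu' : ⁅⁅ρ x, y⁆, z⁆ = ⁅⁅x, ρ y⁆, z⁆ := by rw [hu]
  simp only [mstar, ρ_add, ρ_smul, LieEquiv.map_lie, hx2, hy2]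
  simp only [sub_lie, lie_sub, add_lie, lie_add, neg_lie, lie_neg, smul_lie, lie_smul]
  linear_combination (norm := module) (2:F) • hu'
end

section
/- Let L be a Lie algebra with triality over a field of characteristic ≠ 2, 3, H the (-1)-eigenspace of σ, and * the Malcev product. Then the Jacobian J(x,y,z) = (x*y)*z + (y*z)*x + (z*x)*y satisfies J(x,y,z) = 6[[x^{ρ²}, y^ρ], z] for all x, y, z ∈ H. -/
/-- The Jacobian J(x,y,z) = (x*y)*z + (y*z)*x + (z*x)*y equals 6[[x^{ρ²}, y^ρ], z]
    for x, y, z in the (-1)-eigenspace H of σ, in a Lie algebra with triality over a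
    field of characteristic ≠ 2,3. -/
theorem lie_triality_jacobian (F : Type*) [Field F] (h2 : (2 : F) ≠ 0) (h3 : (3 : F) ≠ 0)
    (L : Type*) [LieRing L] [LieAlgebra F L] (ρ σ : L ≃ₗ⁅F⁆ L)
    (hρ : ∀ x : L, ρ (ρ (ρ x)) = x) (hσ : ∀ x : L, σ (σ x) = x)
    (hρσ : ∀ x : L, ρ (σ (ρ (σ x))) = x)
    (htri : ∀ x : L, (σ x - x) + ρ (σ x - x) + ρ (ρ (σ x - x)) = 0)
    (x y z : L) (hx : σ x = -x) (hy : σ y = -y) (hz : σ z = -z) :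
    mstar ρ (mstar ρ x y) z + mstar ρ (mstar ρ y z) x + mstar ρ (mstar ρ z x) y =
      (6 : F) • ⁅⁅ρ (ρ x), ρ y⁆, z⁆ := by
  have rlie : ∀ a b : L, ρ ⁅a, b⁆ = ⁅ρ a, ρ b⁆ := fun a b => LieHom.map_lie ρ.toLieHom a b
  have radd : ∀ a b : L, ρ (a + b) = ρ a + ρ b := fun a b => map_add ρ.toLinearEquiv a b
  have rsub : ∀ a b : L, ρ (a - b) = ρ a - ρ b := fun a b => map_sub ρ.toLinearEquiv a b
  have rneg : ∀ a : L, ρ (-a) = -ρ a := fun a => map_neg ρ.toLinearEquiv a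
  have rsmul : ∀ (c : F) (a : L), ρ (c • a) = c • ρ a := fun c a => map_smul ρ.toLinearEquiv c a
  have slie : ∀ a b : L, σ ⁅a, b⁆ = ⁅σ a, σ b⁆ := fun a b => LieHom.map_lie σ.toLieHom a b
  have sadd : ∀ a b : L, σ (a + b) = σ a + σ b := fun a b => map_add σ.toLinearEquiv a b
  have ssmul : ∀ (c : F) (a : L), σ (c • a) = c • σ a := fun c a => map_smul σ.toLinearEquiv c a
  -- Step 1: for u ∈ H, u + ρ u + ρ² u = 0
  have hsum : ∀ u : L, σ u = -u → ρ (ρ u) = -u - ρ u := by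
    intro u hu
    have h := htri u
    rw [hu] at h
    simp only [rsub, rneg] at h
    have h2' : (2 : F) • (ρ (ρ u) - (-u - ρ u)) = 0 := by
      linear_combination (norm := module) -h
    rcases smul_eq_zero.mp h2' with hc | hc
    · exact absurd hc h2
    · exact sub_eq_zero.mp hc
  -- Step 2: σ(ρ u) = u + ρ u for u ∈ H
  have hsρ : ∀ u : L, σ u = -u → σ (ρ u) = u + ρ u := by
    intro u hu
    have h1 := hρσ (σ u)
    rw [hσ u, hu] at h1
    have h2' := congrArg (fun w => ρ (ρ w)) h1
    rw [hρ (σ (ρ u))] at h2'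
    rw [rneg, rneg, hsum u hu] at h2'
    rw [h2']
    module
  -- Step 3: the key degree-2 relation [a, ρ b] = [ρ a, b] for a, b ∈ H
  have rel2 : ∀ a b : L, σ a = -a → σ b = -b → ⁅a, ρ b⁆ = ⁅ρ a, b⁆ := by
    intro a b ha hb
    have ha2 : ρ (ρ a) = -a - ρ a := hsum a ha
    have hb2 : ρ (ρ b) = -b - ρ b := hsum b hb
    have h := htri ⁅a, ρ b⁆
    simp only [slie, ha, hsρ b hb] at h
    simp only [rsub, radd, rneg, rlie] at h
    simp only [hρ, ha2, hb2, rsub, rneg, radd] at h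
    simp only [lie_add, add_lie, lie_sub, sub_lie, lie_neg, neg_lie] at h
    have h9 : (3 : F) • (⁅a, ρ b⁆ - ⁅ρ a, b⁆) = 0 := by
      linear_combination (norm := module) -h
    rcases smul_eq_zero.mp h9 with hc | hc
    · exact absurd hc h3
    · exact sub_eq_zero.mp hc
  have hx2 : ρ (ρ x) = -x - ρ x := hsum x hx
  have hy2 : ρ (ρ y) = -y - ρ y := hsum y hy
  have hz2 : ρ (ρ z) = -z - ρ z := hsum z hz
  have rxy : ⁅x, ρ y⁆ = ⁅ρ x, y⁆ := rel2 x y hx hy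
  have rxz : ⁅x, ρ z⁆ = ⁅ρ x, z⁆ := rel2 x z hx hz
  have ryz : ⁅y, ρ z⁆ = ⁅ρ y, z⁆ := rel2 y z hy hz
  -- the element a = [x,y] + 2[x,ρy] lies in H
  have haH : σ (⁅x, y⁆ + (2 : F) • ⁅x, ρ y⁆) = -(⁅x, y⁆ + (2 : F) • ⁅x, ρ y⁆) := by
    simp only [sadd, ssmul, slie, hx, hy, hsρ y hy]
    simp only [lie_add, lie_neg, neg_lie]
    module
  -- the degree-3 relation R(x,y,z)
  have lr1 : ⁅⁅x, ρ y⁆, z⁆ = ⁅⁅ρ x, y⁆, z⁆ := by rw [rxy]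
  have hR : ⁅⁅x, y⁆, ρ z⁆ + (2 : F) • ⁅⁅x, ρ y⁆, ρ z⁆ + (2 : F) • ⁅⁅x, ρ y⁆, z⁆
      + ⁅⁅ρ x, ρ y⁆, z⁆ = 0 := by
    have h := rel2 (⁅x, y⁆ + (2 : F) • ⁅x, ρ y⁆) z haH hz
    simp only [radd, rsmul, rlie, hy2] at h
    simp only [add_lie, smul_lie, lie_sub, lie_neg, sub_lie, neg_lie, lie_add] at h
    linear_combination (norm := module) h + (2 : F) • lr1
  -- lifted degree-2 relations
  have lr_xy_z : ⁅⁅x, ρ y⁆, z⁆ = ⁅⁅ρ x, y⁆, z⁆ := by rw [rxy]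
  have lr_xy_Z : ⁅⁅x, ρ y⁆, ρ z⁆ = ⁅⁅ρ x, y⁆, ρ z⁆ := by rw [rxy]
  have lr_xz_y : ⁅⁅x, ρ z⁆, y⁆ = ⁅⁅ρ x, z⁆, y⁆ := by rw [rxz]
  have lr_xz_Y : ⁅⁅x, ρ z⁆, ρ y⁆ = ⁅⁅ρ x, z⁆, ρ y⁆ := by rw [rxz]
  have lr_yz_x : ⁅⁅y, ρ z⁆, x⁆ = ⁅⁅ρ y, z⁆, x⁆ := by rw [ryz]
  have lr_yz_X : ⁅⁅y, ρ z⁆, ρ x⁆ = ⁅⁅ρ y, z⁆, ρ x⁆ := by rw [ryz]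
  -- skew-symmetry instances
  have sk1 : ⁅⁅x, ρ z⁆, y⁆ + ⁅⁅ρ z, x⁆, y⁆ = 0 := by
    rw [← lie_skew x (ρ z), neg_lie]; simp
  have sk2 : ⁅⁅x, ρ z⁆, ρ y⁆ + ⁅⁅ρ z, x⁆, ρ y⁆ = 0 := by
    rw [← lie_skew x (ρ z), neg_lie]; simp
  have sk3 : ⁅⁅ρ x, z⁆, y⁆ + ⁅⁅z, ρ x⁆, y⁆ = 0 := by
    rw [← lie_skew (ρ x) z, neg_lie]; simp
  have sk4 : ⁅⁅ρ x, z⁆, ρ y⁆ + ⁅⁅z, ρ x⁆, ρ y⁆ = 0 := by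
    rw [← lie_skew (ρ x) z, neg_lie]; simp
  -- Jacobi identity in left-normed form
  have jac : ∀ p q r : L, ⁅⁅p, q⁆, r⁆ + ⁅⁅q, r⁆, p⁆ + ⁅⁅r, p⁆, q⁆ = 0 := by
    intro p q r
    have h := lie_jacobi p q r
    rw [(lie_skew p ⁅q, r⁆).symm, (lie_skew q ⁅r, p⁆).symm, (lie_skew r ⁅p, q⁆).symm] at h
    linear_combination (norm := module) -h
  -- final assembly
  simp only [mstar]
  simp only [rlie, radd, rsmul]
  simp only [hx2, hy2, hz2]
  simp only [add_lie, lie_add, smul_lie, lie_smul, sub_lie, lie_sub, neg_lie, lie_neg]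
  linear_combination (norm := module)
    (4 : F) • sk1 + (2 : F) • sk2 - (4 : F) • sk3 - (2 : F) • sk4
    + jac x y z - (2 : F) • jac x y (ρ z) - (2 : F) • jac x (ρ y) (ρ z)
    - (2 : F) • jac (ρ x) y (ρ z) + (2 : F) • jac (ρ x) (ρ y) z
    - (2 : F) • lr_xy_z - (2 : F) • lr_xy_Z - (4 : F) • lr_xz_y - (2 : F) • lr_xz_Y
    - (2 : F) • lr_yz_x + (2 : F) • lr_yz_X
    + (2 : F) • hR
end

section
/- Let L be a Lie algebra with triality over a field of characteristic ≠ 2, 3, and H the (-1)-eigenspace of σ. Then [[x^{ρ²}, y^ρ], z] = [[z^{ρ²}, x^ρ], y] for all x, y, z ∈ H. -/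
/-- [[x^{ρ²}, y^ρ], z] = [[z^{ρ²}, x^ρ], y] for x, y, z in the (-1)-eigenspace H of σ,
    in a Lie algebra with triality over a field of characteristic ≠ 2,3. -/
theorem lie_triality_cyclic (F : Type*) [Field F] (h2 : (2 : F) ≠ 0) (h3 : (3 : F) ≠ 0)
    (L : Type*) [LieRing L] [LieAlgebra F L] (ρ σ : L ≃ₗ⁅F⁆ L)
    (hρ : ∀ x : L, ρ (ρ (ρ x)) = x) (hσ : ∀ x : L, σ (σ x) = x)
    (hρσ : ∀ x : L, ρ (σ (ρ (σ x))) = x)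
    (htri : ∀ x : L, (σ x - x) + ρ (σ x - x) + ρ (ρ (σ x - x)) = 0)
    (x y z : L) (hx : σ x = -x) (hy : σ y = -y) (hz : σ z = -z) :
    ⁅⁅ρ (ρ x), ρ y⁆, z⁆ = ⁅⁅ρ (ρ z), ρ x⁆, y⁆ := by
  -- additivity helpers
  have ρadd : ∀ u v : L, ρ (u + v) = ρ u + ρ v := fun u v => ρ.toLieHom.map_add u v
  have ρsub : ∀ u v : L, ρ (u - v) = ρ u - ρ v := fun u v => ρ.toLieHom.map_sub u v
  have ρneg : ∀ u : L, ρ (-u) = -ρ u := fun u => ρ.toLieHom.map_neg u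
  have ρsmul : ∀ (c : F) (u : L), ρ (c • u) = c • ρ u := fun c u => ρ.toLieHom.map_smul c u
  have σadd : ∀ u v : L, σ (u + v) = σ u + σ v := fun u v => σ.toLieHom.map_add u v
  have σsmul : ∀ (c : F) (u : L), σ (c • u) = c • σ u := fun c u => σ.toLieHom.map_smul c u
  -- cancellation of a nonzero scalar
  have cancel : ∀ c : F, c ≠ 0 → ∀ u v : L, c • u = c • v → u = v := by
    intro c hc u v hcv
    have := congrArg (fun w : L => c⁻¹ • w) hcv
    simpa [smul_smul, inv_mul_cancel₀ hc] using this
  -- σ ∘ ρ = ρ² ∘ σ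
  have hσρ : ∀ v : L, σ (ρ v) = ρ (ρ (σ v)) := by
    intro v
    have h1 := hρσ (σ v)
    rw [hσ v] at h1
    calc σ (ρ v) = ρ (ρ (ρ (σ (ρ v)))) := (hρ _).symm
      _ = ρ (ρ (σ v)) := by rw [h1]
  -- for h in the (-1)-eigenspace, h + ρ h + ρ² h = 0
  have hsum : ∀ v : L, σ v = -v → ρ (ρ v) = -v - ρ v := by
    intro v hv
    have h := htri v
    rw [hv] at h
    simp only [ρsub, ρneg] at h
    have h' : (2 : F) • ρ (ρ v) = (2 : F) • (-v - ρ v) := by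
      linear_combination (norm := module) -h
    exact cancel 2 h2 _ _ h'
  -- the key degree-1 identity : ⁅ρ a, b⁆ = ⁅a, ρ b⁆ for a, b in the (-1)-eigenspace
  have f2 : ∀ a b : L, σ a = -a → σ b = -b → ⁅ρ a, b⁆ = ⁅a, ρ b⁆ := by
    intro a b ha hb
    have hA2 : ρ (ρ a) = -a - ρ a := hsum a ha
    have hB2 : ρ (ρ b) = -b - ρ b := hsum b hb
    have e1 : σ (ρ (ρ a)) = -ρ a := by
      rw [hσρ (ρ a), hσρ a, hρ (σ a), ha, ρneg]
    have e2 : σ (ρ b) = -ρ (ρ b) := by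
      rw [hσρ b, hb, ρneg, ρneg]
    have h := htri ⁅ρ (ρ a), ρ b⁆
    rw [LieEquiv.map_lie, e1, e2] at h
    simp only [ρsub, ρneg, LieEquiv.map_lie, hρ] at h
    simp only [hA2, hB2] at h
    simp only [sub_lie, lie_sub, neg_lie, lie_neg, add_lie, lie_add, neg_neg] at h
    have key3 : (3 : F) • ⁅ρ a, b⁆ = (3 : F) • ⁅a, ρ b⁆ := by
      linear_combination (norm := module) -h
    exact cancel 3 h3 _ _ key3
  -- σ (ρ x) = x + ρ x for x in the (-1)-eigenspace
  have hσA : ∀ v : L, σ v = -v → σ (ρ v) = v + ρ v := by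
    intro v hv
    rw [hσρ v, hv, ρneg, ρneg, hsum v hv]
    abel
  -- Jacobi identity in canonical right-nested form
  have jac : ∀ p q r : L, ⁅p, ⁅q, r⁆⁆ - ⁅q, ⁅p, r⁆⁆ + ⁅r, ⁅p, q⁆⁆ = 0 := by
    intro p q r
    rw [leibniz_lie p q r, ← lie_skew ⁅p, q⁆ r]
    abel
  -- the element ⁅x + 2 ρ x, y⁆ lies in the (-1)-eigenspace
  have hσt : ∀ u v : L, σ u = -u → σ v = -v →
      σ (⁅u, v⁆ + (2 : F) • ⁅ρ u, v⁆) = -(⁅u, v⁆ + (2 : F) • ⁅ρ u, v⁆) := by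
    intro u v hu hv
    rw [σadd, σsmul, LieEquiv.map_lie, LieEquiv.map_lie, hu, hv, hσA u hu]
    simp only [neg_lie, lie_neg, neg_neg, add_lie]
    module
  -- composite instance of f2 with second argument ⁅x + 2 ρ x, y⁆, canonicalized
  have hZc : ⁅ρ z, ⁅x, y⁆⁆ + (2 : F) • ⁅ρ z, ⁅ρ x, y⁆⁆ + (2 : F) • ⁅z, ⁅x, ρ y⁆⁆
      + ⁅z, ⁅ρ x, ρ y⁆⁆ = 0 := by
    have h := f2 z (⁅x, y⁆ + (2 : F) • ⁅ρ x, y⁆) hz (hσt x y hx hy)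
    rw [ρadd, ρsmul, LieEquiv.map_lie, LieEquiv.map_lie, hsum x hx] at h
    simp only [lie_add, lie_smul, sub_lie, neg_lie, lie_sub, lie_neg, add_lie] at h
    linear_combination (norm := module) h
  -- composite instance of f2 with second argument ⁅x + 2 ρ x, z⁆, canonicalized
  have hYc : ⁅ρ y, ⁅x, z⁆⁆ + (2 : F) • ⁅ρ y, ⁅ρ x, z⁆⁆ + (2 : F) • ⁅y, ⁅x, ρ z⁆⁆
      + ⁅y, ⁅ρ x, ρ z⁆⁆ = 0 := by
    have h := f2 y (⁅x, z⁆ + (2 : F) • ⁅ρ x, z⁆) hy (hσt x z hx hz)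
    rw [ρadd, ρsmul, LieEquiv.map_lie, LieEquiv.map_lie, hsum x hx] at h
    simp only [lie_add, lie_smul, sub_lie, neg_lie, lie_sub, lie_neg, add_lie] at h
    linear_combination (norm := module) h
  -- degree-1 instances of f2 in context
  have Iac_b : ⁅y, ⁅ρ x, z⁆⁆ = ⁅y, ⁅x, ρ z⁆⁆ := by rw [f2 x z hx hz]
  have Ibc_a : ⁅x, ⁅ρ y, z⁆⁆ = ⁅x, ⁅y, ρ z⁆⁆ := by rw [f2 y z hy hz]
  have Ibc_A : ⁅ρ x, ⁅ρ y, z⁆⁆ = ⁅ρ x, ⁅y, ρ z⁆⁆ := by rw [f2 y z hy hz]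
  -- the main combination
  have key3 : (3 : F) • (⁅z, ⁅x, ρ y⁆⁆ + ⁅z, ⁅ρ x, ρ y⁆⁆ + ⁅y, ⁅ρ x, z⁆⁆ + ⁅y, ⁅ρ x, ρ z⁆⁆)
      = (3 : F) • (0 : L) := by
    linear_combination (norm := module) (3 : F) • Iac_b - Ibc_a - (2 : F) • Ibc_A + hZc + hYc
      - jac x y (ρ z) + jac x (ρ y) z - (2 : F) • jac (ρ x) y (ρ z)
      + (2 : F) • jac (ρ x) (ρ y) z
  have key : ⁅z, ⁅x, ρ y⁆⁆ + ⁅z, ⁅ρ x, ρ y⁆⁆ + ⁅y, ⁅ρ x, z⁆⁆ + ⁅y, ⁅ρ x, ρ z⁆⁆ = 0 :=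
    cancel 3 h3 _ _ key3
  -- finish
  rw [hsum x hx, hsum z hz, ← lie_skew ⁅-x - ρ x, ρ y⁆ z, ← lie_skew ⁅-z - ρ z, ρ x⁆ y]
  simp only [sub_lie, neg_lie, lie_sub, lie_neg, neg_neg]
  rw [show ⁅z, ρ x⁆ = -⁅ρ x, z⁆ from (lie_skew z (ρ x)).symm,
    show ⁅ρ z, ρ x⁆ = -⁅ρ x, ρ z⁆ from (lie_skew (ρ z) (ρ x)).symm]
  simp only [lie_neg, neg_neg]
  linear_combination (norm := module) key
end

section
/- Let G be a group, p a prime, N ⊴ G a normal subgroup, and N' the subgroup generated by [N,N] and p-th powers of elements of N. Then for all x ∈ G, y ∈ N and n ≥ 1: the p^n-fold iterated commutator [x,[x,[…[x,y]…]]] (with p^n occurrences of x) is congruent to [x^{p^n}, y] modulo N'. -/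
/-- The group commutator [a,b] = a⁻¹b⁻¹ab. -/
def gcomm {G : Type*} [Group G] (a b : G) : G := a⁻¹ * b⁻¹ * a * b

/-- The subgroup N' generated by [N,N] and p-th powers of elements of N. -/
def derp {G : Type*} [Group G] (N : Subgroup G) (p : ℕ) : Subgroup G :=
  Subgroup.closure ({x | ∃ a ∈ N, ∃ b ∈ N, x = gcomm a b} ∪ {x | ∃ a ∈ N, x = a ^ p})

/-!
Conjugation by `x` induces an endomorphism `T` of the elementary abelian `p`-group `N/N'`, and
`z ↦ [x,z]` induces `1 - T`. The endomorphism ring of `N/N'` has characteristic `p`, so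
`(1 - T)^(p^n) = 1 - T^(p^n)`, and `1 - T^(p^n)` is what `z ↦ [x^(p^n), z]` induces.
-/

theorem one_sub_pow_prime_pow_of_natCast_eq_zero {R : Type*} [Ring R] {p : ℕ} (hp : p.Prime)
    (hR : (p : R) = 0) (a : R) (n : ℕ) : (1 - a) ^ p ^ n = 1 - a ^ p ^ n := by
  nontriviality R
  have : Fact p.Prime := ⟨hp⟩
  have : CharP R p := (CharP.charP_iff_prime_eq_zero hp).2 hR
  simpa using sub_pow_char_pow_of_commute p n (Commute.one_left a)

theorem CommGroup.iterate_div_map_prime_pow {A : Type*} [CommGroup A] {p : ℕ} (hp : p.Prime)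
    (hA : ∀ a : A, a ^ p = 1) (σ : A →* A) (n : ℕ) (a : A) :
    (fun b => b / σ b)^[p ^ n] a = a / σ^[p ^ n] a := by
  have hp0 : (p : AddMonoid.End (Additive A)) = 0 := by
    ext b
    exact hA b.toMul
  have key := congrArg (· (.ofMul a))
    (one_sub_pow_prime_pow_of_natCast_eq_zero hp hp0 σ.toAdditive n)
  simp only [AddMonoid.End.coe_pow] at key
  exact key

section

variable {G : Type*} [Group G]

theorem gcomm_eq_conj_inv_mul (a b : G) : gcomm a b = (a⁻¹ * b * a)⁻¹ * b := by
  simp only [gcomm]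
  group

theorem map_gcomm {H F : Type*} [Group H] [FunLike F G H] [MonoidHomClass F G H] (f : F)
    (a b : G) : f (gcomm a b) = gcomm (f a) (f b) := by
  simp only [gcomm, map_mul, map_inv]

theorem MulAut.iterate_conjNormal_inv_apply {N : Subgroup G} [N.Normal] (x : G) (m : ℕ)
    (z : N) : ((((MulAut.conjNormal x)⁻¹ : MulAut N))^[m] z : G) = (x ^ m)⁻¹ * z * x ^ m := by
  induction m with
  | zero => simp
  | succ m ih =>
    rw [Function.iterate_succ_apply', MulAut.conjNormal_inv_apply, ih, pow_succ]
    group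

variable (N : Subgroup G) (p : ℕ)

theorem gcomm_mem_derp {a b : G} (ha : a ∈ N) (hb : b ∈ N) : gcomm a b ∈ derp N p :=
  Subgroup.subset_closure (Or.inl ⟨a, ha, b, hb, rfl⟩)

theorem pow_mem_derp {a : G} (ha : a ∈ N) : a ^ p ∈ derp N p :=
  Subgroup.subset_closure (Or.inr ⟨a, ha, rfl⟩)

theorem derp_normal (hN : N.Normal) : (derp N p).Normal where
  conj_mem k hk g := by
    have hle : derp N p ≤ (derp N p).comap (MulAut.conj g).toMonoidHom := by
      refine (Subgroup.closure_le _).2 ?_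
      rintro _ (⟨a, ha, b, hb, rfl⟩ | ⟨a, ha, rfl⟩)
      · rw [SetLike.mem_coe, Subgroup.mem_comap, MulEquiv.coe_toMonoidHom, map_gcomm]
        exact gcomm_mem_derp N p (hN.conj_mem a ha g) (hN.conj_mem b hb g)
      · simpa using pow_mem_derp N p (hN.conj_mem a ha g)
    simpa using hle hk

variable [((derp N p).subgroupOf N).Normal]

theorem derp_quotient_mul_comm (a b : N ⧸ (derp N p).subgroupOf N) : a * b = b * a := by
  induction a using QuotientGroup.induction_on with | H a =>
  induction b using QuotientGroup.induction_on with | H b =>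
  rw [← QuotientGroup.mk_mul, ← QuotientGroup.mk_mul, QuotientGroup.eq,
    Subgroup.mem_subgroupOf]
  have hab : (((a * b)⁻¹ * (b * a) : N) : G) = gcomm (b : G) a := by
    simp only [gcomm, Subgroup.coe_mul, Subgroup.coe_inv]
    group
  exact hab ▸ gcomm_mem_derp N p b.2 a.2

theorem derp_quotient_pow_eq_one (a : N ⧸ (derp N p).subgroupOf N) : a ^ p = 1 := by
  induction a using QuotientGroup.induction_on with | H a =>
  rw [← QuotientGroup.mk_pow, QuotientGroup.eq_one_iff, Subgroup.mem_subgroupOf]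
  exact pow_mem_derp N p a.2

end

theorem iterated_commutator_pow_general (G : Type*) [Group G] (p : ℕ) [Fact p.Prime] (n : ℕ)
    (N : Subgroup G) (hN : N.Normal) (x : G) (y : G) (hy : y ∈ N) :
    ((fun z => gcomm x z)^[p ^ n] y)⁻¹ * gcomm (x ^ p ^ n) y ∈ derp N p := by
  have := hN
  set K := (derp N p).subgroupOf N
  have := (derp_normal N p hN).subgroupOf N
  let _ : CommGroup (N ⧸ K) := { mul_comm := derp_quotient_mul_comm N p }
  set c : MulAut N := (MulAut.conjNormal x)⁻¹
  have hcK : K ≤ K.comap c.toMonoidHom := fun k hk => by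
    simpa [K, c, Subgroup.mem_subgroupOf, MulAut.conjNormal_inv_apply] using
      (derp_normal N p hN).conj_mem _ hk x⁻¹
  set π := QuotientGroup.mk' K
  set σ := QuotientGroup.map K K c.toMonoidHom hcK
  have hval : Function.Semiconj Subtype.val (fun z => (c z)⁻¹ * z) (gcomm x) := fun z => by
    simp [c, gcomm_eq_conj_inv_mul]
  have hπ : Function.Semiconj π (fun z => (c z)⁻¹ * z) (fun b => b / σ b) := fun z => by
    simp [σ, π, inv_mul_eq_div]
  have hσ : Function.Semiconj π c σ := fun _ => rfl
  have key := CommGroup.iterate_div_map_prime_pow Fact.out (derp_quotient_pow_eq_one N p) σ n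
    (π ⟨y, hy⟩)
  rw [← hπ.iterate_right, ← hσ.iterate_right, div_eq_inv_mul, ← map_inv, ← map_mul,
    QuotientGroup.mk'_apply, QuotientGroup.mk'_apply, QuotientGroup.eq,
    Subgroup.mem_subgroupOf] at key
  rwa [Subgroup.coe_mul, Subgroup.coe_inv, Subgroup.coe_mul, Subgroup.coe_inv,
    hval.iterate_right, MulAut.iterate_conjNormal_inv_apply, ← gcomm_eq_conj_inv_mul] at key

/-- The p^n-fold iterated commutator [x,[x,…,[x,y]…]] is congruent to [x^{p^n}, y]
    modulo N' = [N,N]·Nᵖ, for x ∈ G, y ∈ N. -/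
theorem iterated_commutator_pow (G : Type*) [Group G] (p : ℕ) [Fact p.Prime] (n : ℕ)
    (hn : 1 ≤ n) (N : Subgroup G) (hN : N.Normal) (x : G) (y : G) (hy : y ∈ N) :
    ((fun z => gcomm x z)^[p ^ n] y)⁻¹ * gcomm (x ^ p ^ n) y ∈ derp N p :=
  iterated_commutator_pow_general G p n N hN x y hy
end

section
/- Let M be a Malcev algebra over a field of characteristic > 3 and I an ideal of M. Then Ĩ = I² + I²·M is again an ideal of M. -/
/-- The span of the set of products of elements of A with elements of B,
    for a bilinear multiplication `mul`. -/
def mulSub {F M : Type*} [Field F] [AddCommGroup M] [Module F M]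
    (mul : M →ₗ[F] M →ₗ[F] M) (A B : Submodule F M) : Submodule F M :=
  Submodule.span F {x | ∃ a ∈ A, ∃ b ∈ B, x = mul a b}

/-- Let M be a Malcev algebra over a field of characteristic > 3 and I an ideal of M.
    Then Ĩ = I² + I²·M is again an ideal of M. -/
theorem malcev_ideal_tilde (F : Type*) [Field F] (hchar : 3 < ringChar F)
    (M : Type*) [AddCommGroup M] [Module F M] (mul : M →ₗ[F] M →ₗ[F] M)
    (anti : ∀ x y : M, mul x y = -mul y x)
    (malcev : ∀ x y z : M,
      mul (mul x y) (mul x z) =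
        mul (mul (mul x y) z) x + mul (mul (mul y z) x) x + mul (mul (mul z x) x) y)
    (I : Submodule F M) (hI : ∀ a ∈ I, ∀ m : M, mul a m ∈ I) :
    ∀ a ∈ mulSub mul I I ⊔ mulSub mul (mulSub mul I I) ⊤, ∀ m : M,
      mul a m ∈ mulSub mul I I ⊔ mulSub mul (mulSub mul I I) ⊤ := by
  set J := mulSub mul I I ⊔ mulSub mul (mulSub mul I I) ⊤ with hJ
  have hI' : ∀ m : M, ∀ a ∈ I, mul m a ∈ I := by
    intro m a ha
    rw [anti]
    exact neg_mem (hI a ha m)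
  have hI2 : ∀ x ∈ I, ∀ y ∈ I, mul x y ∈ mulSub mul I I := by
    intro x hx y hy
    exact Submodule.subset_span ⟨x, hx, y, hy, rfl⟩
  have hI2M : ∀ p ∈ mulSub mul I I, ∀ z : M,
      mul p z ∈ mulSub mul (mulSub mul I I) ⊤ := by
    intro p hp z
    exact Submodule.subset_span ⟨p, hp, z, trivial, rfl⟩
  have two_ne : (2 : F) ≠ 0 := by
    intro h
    have h2 : ((2 : ℕ) : F) = 0 := by exact_mod_cast h
    rw [CharP.cast_eq_zero_iff F (ringChar F) 2] at h2
    have := Nat.le_of_dvd (by norm_num) h2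
    omega
  -- the key lemma: ((xy)z)w ∈ J for x, y ∈ I
  have key : ∀ x ∈ I, ∀ y ∈ I, ∀ z w : M,
      mul (mul (mul x y) z) w ∈ J := by
    intro x hx y hy z w
    have hid : (2 : F) • mul (mul (mul x y) z) w =
        (2 : F) • mul (mul x z) (mul y w) + (2 : F) • mul (mul (mul x w) y) z
        - (2 : F) • mul (mul (mul y z) w) x - (2 : F) • mul (mul (mul z w) x) y := by
      have h1 := malcev (x + y) z w
      have h2 := malcev x z w
      have h3 := malcev y z w
      have h4 := malcev (x + z) w y
      have h5 := malcev x w y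
      have h6 := malcev z w y
      have h7 := malcev (x + w) y z
      have h8 := malcev x y z
      have h9 := malcev w y z
      simp only [map_add, LinearMap.add_apply] at h1 h4 h7
      have e1 : mul (mul w x) (mul y z) = -(mul (mul x w) (mul y z)) := by rw [anti w x]; simp
      have e2 : mul (mul w x) (mul y z) = -(mul (mul w x) (mul z y)) := by rw [anti y z]; simp
      have e3 : mul (mul w x) (mul z y) = -(mul (mul x w) (mul z y)) := by rw [anti w x]; simp
      have e4 : mul (mul w y) (mul x z) = -(mul (mul x z) (mul w y)) := anti (mul w y) (mul x z)
      have e5 : mul (mul w z) (mul x y) = -(mul (mul x y) (mul w z)) := anti (mul w z) (mul x y)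
      have e6 : mul (mul w z) (mul x y) = -(mul (mul z w) (mul x y)) := by rw [anti w z]; simp
      have e7 : mul (mul w (mul x z)) y = -(mul (mul w (mul z x)) y) := by rw [anti x z]; simp
      have e8 : mul (mul w (mul x z)) y = -(mul (mul (mul x z) w) y) := by rw [anti w (mul x z)]; simp
      have e9 : mul (mul w (mul z x)) y = -(mul (mul (mul z x) w) y) := by rw [anti w (mul z x)]; simp
      have e10 : mul (mul x w) (mul y z) = -(mul (mul y z) (mul x w)) := anti (mul x w) (mul y z)
      have e11 : mul (mul x z) (mul w y) = -(mul (mul x z) (mul y w)) := by rw [anti w y]; simp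
      have e12 : mul (mul y (mul w x)) z = -(mul (mul y (mul x w)) z) := by rw [anti w x]; simp
      have e13 : mul (mul y (mul w x)) z = -(mul (mul (mul w x) y) z) := by rw [anti y (mul w x)]; simp
      have e14 : mul (mul y (mul x w)) z = -(mul (mul (mul x w) y) z) := by rw [anti y (mul x w)]; simp
      have e15 : mul (mul z (mul x y)) w = -(mul (mul z (mul y x)) w) := by rw [anti x y]; simp
      have e16 : mul (mul z (mul x y)) w = -(mul (mul (mul x y) z) w) := by rw [anti z (mul x y)]; simp
      have e17 : mul (mul z (mul y x)) w = -(mul (mul (mul y x) z) w) := by rw [anti z (mul y x)]; simp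
      linear_combination (norm := module) - h1 + h2 + h3 + h4 - h5 - h6 - h7 + h8 + h9 - e1 + e2 - e3 + e4 + e5 - e6 + e7 - e8 - e9 + e10 - e11 + e12 - e13 - e14 - e15 + e16 + e17
    have m1 : mul (mul x z) (mul y w) ∈ J :=
      le_sup_left (α := Submodule F M) (hI2 _ (hI x hx z) _ (hI y hy w))
    have m2 : mul (mul (mul x w) y) z ∈ J :=
      le_sup_right (α := Submodule F M) (hI2M _ (hI2 _ (hI x hx w) _ hy) z)
    have m3 : mul (mul (mul y z) w) x ∈ J :=
      le_sup_left (α := Submodule F M) (hI2 _ (hI _ (hI y hy z) w) _ hx)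
    have m4 : mul (mul (mul z w) x) y ∈ J :=
      le_sup_left (α := Submodule F M) (hI2 _ (hI' _ _ hx) _ hy)
    have : mul (mul (mul x y) z) w = (2 : F)⁻¹ • ((2 : F) • mul (mul (mul x y) z) w) :=
      (inv_smul_smul₀ two_ne _).symm
    rw [this, hid]
    exact Submodule.smul_mem _ _ (sub_mem (sub_mem (add_mem
      (Submodule.smul_mem _ _ m1) (Submodule.smul_mem _ _ m2))
      (Submodule.smul_mem _ _ m3)) (Submodule.smul_mem _ _ m4))
  intro a ha m
  have : J ≤ Submodule.comap (mul.flip m) J := by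
    rw [hJ]
    apply sup_le
    · apply Submodule.span_le.mpr
      rintro _ ⟨p, hp, q, hq, rfl⟩
      simp only [SetLike.mem_coe, Submodule.mem_comap, LinearMap.flip_apply]
      exact le_sup_right (α := Submodule F M) (hI2M _ (hI2 _ hp _ hq) m)
    · apply Submodule.span_le.mpr
      rintro _ ⟨p, hp, z, -, rfl⟩
      simp only [SetLike.mem_coe, Submodule.mem_comap, LinearMap.flip_apply]
      have hle : mulSub mul I I ≤
          Submodule.comap ((mul.flip m).comp (mul.flip z)) J := by
        apply Submodule.span_le.mpr
        rintro _ ⟨x, hx, y, hy, rfl⟩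
        simp only [SetLike.mem_coe, Submodule.mem_comap, LinearMap.comp_apply,
          LinearMap.flip_apply]
        exact key x hx y hy z m
      simpa using hle hp
  exact this ha
end
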